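/- Let μ > 0 and let f : ℝ → ℝ be measurable with ∫_ℝ e^{-μ cosh y} |f(sinh y)| dy < ∞. Then ∫_ℝ e^{-μ cosh y} f(sinh y) dy = ∫_0^∞ (1/v) exp(-1/(2v)) exp(-μ²v/2) E[f(β_v)] dv, where β_v is a centered Gaussian random variable of variance v, i.e. E[f(β_v)] = ∫_ℝ f(x) (2πv)^{-1/2} exp(-x²/(2v)) dx. -/

import Mathlib

/-!
Substituting `x = sinh y` turns the left side into `∫ f x * exp (-μ √(1 + x²)) / √(1 + x²) dx`,
so by Fubini it suffices that for `a = √(1 + x²)`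
`∫₀^∞ (2π)^(-1/2) v^(-3/2) exp (-a² / (2v) - μ² v / 2) dv = exp (-μ a) / a`,
the Laplace transform of the Lévy density. The substitution `u = μ √v - a / √v`, a bijection
from `(0, ∞)` onto `ℝ`, turns `∫ exp (-u² / 2) du = √(2π)` into
`∫ (a/2 · v^(-3/2) + μ/2 · v^(-1/2)) exp (μ a - a² / (2v) - μ² v / 2) dv`, and the inversion
`v ↦ (a / μ)² / v` shows that the two halves of this integral are equal.
-/

open MeasureTheory Real Set

variable {E : Type*} [NormedAddCommGroup E] [NormedSpace ℝ E]

lemma integrable_cosh_smul_comp_sinh_iff (g : ℝ → E) :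
    Integrable (fun y => cosh y • g (sinh y)) ↔ Integrable g := by
  have h := integrableOn_image_iff_integrableOn_abs_deriv_smul MeasurableSet.univ
    (fun y _ => (hasDerivAt_sinh y).hasDerivWithinAt) sinh_injective.injOn g
  simpa only [image_univ, sinh_surjective.range_eq, integrableOn_univ,
    abs_of_pos (cosh_pos _)] using h.symm

lemma integral_cosh_smul_comp_sinh (g : ℝ → E) :
    ∫ y, cosh y • g (sinh y) = ∫ x, g x := by
  have h := integral_image_eq_integral_abs_deriv_smul MeasurableSet.univ
    (fun y _ => (hasDerivAt_sinh y).hasDerivWithinAt) sinh_injective.injOn g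
  simpa only [image_univ, sinh_surjective.range_eq, setIntegral_univ,
    abs_of_pos (cosh_pos _)] using h.symm

section CoshWeight

variable (μ : ℝ)

lemma cosh_mul_exp_div_sqrt_one_add_sinh_sq (y : ℝ) :
    cosh y * (exp (-μ * √(1 + sinh y ^ 2)) / √(1 + sinh y ^ 2)) = exp (-μ * cosh y) := by
  rw [← cosh_sq', sqrt_sq (cosh_pos y).le]
  field_simp [(cosh_pos y).ne']

lemma integral_exp_mul_comp_sinh (f : ℝ → ℝ) :
    ∫ y, exp (-μ * cosh y) * f (sinh y)
      = ∫ x, f x * (exp (-μ * √(1 + x ^ 2)) / √(1 + x ^ 2)) := by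
  rw [← integral_cosh_smul_comp_sinh fun x => f x * (exp (-μ * √(1 + x ^ 2)) / √(1 + x ^ 2))]
  congr 1 with y
  rw [smul_eq_mul, ← cosh_mul_exp_div_sqrt_one_add_sinh_sq μ y]
  ring

lemma integrable_mul_exp_div_sqrt_one_add_sq {f : ℝ → ℝ} (hf : AEStronglyMeasurable f)
    (hint : Integrable fun y => exp (-μ * cosh y) * |f (sinh y)|) :
    Integrable fun x => f x * (exp (-μ * √(1 + x ^ 2)) / √(1 + x ^ 2)) := by
  have h := (integrable_cosh_smul_comp_sinh_iff
    fun x => |f x| * (exp (-μ * √(1 + x ^ 2)) / √(1 + x ^ 2))).1 <| hint.congr <|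
      ae_of_all _ fun y => by
        simp only [smul_eq_mul, ← cosh_mul_exp_div_sqrt_one_add_sinh_sq μ y]
        ring
  refine (integrable_norm_iff (hf.mul (by fun_prop : Measurable _).aestronglyMeasurable)).1
    (h.congr (ae_of_all _ fun x => ?_))
  have hw : 0 ≤ exp (-μ * √(1 + x ^ 2)) / √(1 + x ^ 2) := by positivity
  simp only [Pi.mul_apply, norm_mul, Real.norm_eq_abs, abs_of_nonneg hw]

end CoshWeight

section KernelSwap

variable {α β : Type*} [MeasurableSpace α] [MeasurableSpace β] {μ : Measure α} {ν : Measure β}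
  [SFinite μ] [SFinite ν]

lemma integral_integral_mul_kernel_swap {f : α → ℝ} {K : α → β → ℝ}
    (hf : AEStronglyMeasurable f μ) (hK : AEStronglyMeasurable (Function.uncurry K) (μ.prod ν))
    (hK_nonneg : ∀ x, 0 ≤ᵐ[ν] K x) (hK_int : ∀ x, Integrable (K x) ν)
    (hfK : Integrable (fun x => f x * ∫ y, K x y ∂ν) μ) :
    ∫ y, ∫ x, f x * K x y ∂μ ∂ν = ∫ x, f x * ∫ y, K x y ∂ν ∂μ := by
  have hmeas : AEStronglyMeasurable (Function.uncurry fun x y => f x * K x y) (μ.prod ν) :=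
    hf.comp_fst.mul hK
  have hnorm : ∀ x, ∫ y, ‖f x * K x y‖ ∂ν = ‖f x * ∫ y, K x y ∂ν‖ := by
    intro x
    rw [norm_mul, norm_of_nonneg (integral_nonneg_of_ae (hK_nonneg x)), ← integral_const_mul]
    refine integral_congr_ae ?_
    filter_upwards [hK_nonneg x] with y hy
    rw [norm_mul, norm_of_nonneg hy]
  have hint : Integrable (Function.uncurry fun x y => f x * K x y) (μ.prod ν) := by
    refine (integrable_prod_iff hmeas).2 ⟨ae_of_all _ fun x => (hK_int x).const_mul (f x), ?_⟩
    simpa only [Function.uncurry_apply_pair, hnorm] using hfK.norm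
  rw [← integral_integral_swap hint]
  simp only [integral_const_mul]

end KernelSwap

lemma integral_Ioi_div_sq_smul_comp_div {c : ℝ} (hc : 0 < c) (g : ℝ → E) :
    ∫ v in Ioi 0, (c / v ^ 2) • g (c / v) = ∫ v in Ioi 0, g v := by
  have hderiv : ∀ v ∈ Ioi (0:ℝ), HasDerivWithinAt (fun v => c / v) (-(c / v ^ 2)) (Ioi 0) v := by
    intro v hv
    simpa [div_eq_mul_inv] using ((hasDerivAt_inv (ne_of_gt hv)).const_mul c).hasDerivWithinAt
  have hinj : InjOn (fun v => c / v) (Ioi 0) := fun x _ y _ h => by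
    simpa [div_div_cancel₀ hc.ne'] using congrArg (c / ·) h
  have himage : (fun v => c / v) '' Ioi 0 = Ioi 0 := by
    refine Subset.antisymm (image_subset_iff.2 fun v hv => div_pos hc hv) fun w hw => ?_
    exact ⟨c / w, div_pos hc hw, div_div_cancel₀ hc.ne'⟩
  conv_rhs =>
    rw [← himage, integral_image_eq_integral_abs_deriv_smul measurableSet_Ioi hderiv hinj]
  refine setIntegral_congr_fun measurableSet_Ioi fun v hv => ?_
  rw [abs_neg, abs_of_pos (div_pos hc (pow_pos hv 2))]

section LevySubstitution

variable {a b : ℝ}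

lemma hasDerivAt_mul_sqrt_sub_div_sqrt {v : ℝ} (hv : 0 < v) :
    HasDerivAt (fun v => b * √v - a / √v) (a / 2 * (v * √v)⁻¹ + b / 2 * (√v)⁻¹) v := by
  have hs : 0 < √v := sqrt_pos.2 hv
  have h := ((hasDerivAt_sqrt hv.ne').const_mul b).sub
    ((hasDerivAt_const v a).div (hasDerivAt_sqrt hv.ne') hs.ne')
  refine h.congr_deriv ?_
  rw [show v = √v ^ 2 from (sq_sqrt hv.le).symm, sqrt_sq hs.le]
  field_simp
  ring

lemma strictMonoOn_mul_sqrt_sub_div_sqrt (ha : 0 < a) (hb : 0 < b) :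
    StrictMonoOn (fun v => b * √v - a / √v) (Ioi 0) := by
  intro x hx y _ hxy
  have hsx : 0 < √x := sqrt_pos.2 hx
  have hsxy : √x < √y := sqrt_lt_sqrt hx.le hxy
  have h1 := mul_lt_mul_of_pos_left hsxy hb
  have h2 := div_lt_div_of_pos_left ha hsx hsxy
  simp only
  linarith

lemma image_mul_sqrt_sub_div_sqrt_Ioi (ha : 0 < a) (hb : 0 < b) :
    (fun v => b * √v - a / √v) '' Ioi 0 = univ := by
  refine eq_univ_of_forall fun u => ?_
  -- the positive root `t` of `b t ^ 2 - u t - a = 0`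
  set s := √(u ^ 2 + 4 * a * b)
  have hs : s ^ 2 = u ^ 2 + 4 * a * b := sq_sqrt (by positivity)
  have hus : 0 < u + s := by
    have : |u| < s := by
      rw [← sqrt_sq_eq_abs]; exact sqrt_lt_sqrt (sq_nonneg u) (by nlinarith)
    linarith [neg_abs_le u]
  set t := (u + s) / (2 * b)
  have ht : 0 < t := by positivity
  have hroot : b * t ^ 2 - u * t - a = 0 := by
    simp only [t]; field_simp; linear_combination hs
  refine ⟨t ^ 2, pow_pos ht 2, ?_⟩
  simp only [sqrt_sq ht.le]
  field_simp
  linear_combination hroot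

lemma integrableOn_levy_jacobian_smul_iff (ha : 0 < a) (hb : 0 < b) (g : ℝ → E) :
    IntegrableOn (fun v => (a / 2 * (v * √v)⁻¹ + b / 2 * (√v)⁻¹) • g (b * √v - a / √v)) (Ioi 0)
      ↔ Integrable g := by
  have h := integrableOn_image_iff_integrableOn_abs_deriv_smul measurableSet_Ioi
    (fun v hv => (hasDerivAt_mul_sqrt_sub_div_sqrt hv).hasDerivWithinAt)
    (strictMonoOn_mul_sqrt_sub_div_sqrt ha hb).injOn g
  rw [image_mul_sqrt_sub_div_sqrt_Ioi ha hb, integrableOn_univ] at h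
  rw [h]
  refine integrableOn_congr_fun (fun v (hv : 0 < v) => ?_) measurableSet_Ioi
  rw [abs_of_pos (by positivity)]

lemma integral_levy_jacobian_smul (ha : 0 < a) (hb : 0 < b) (g : ℝ → E) :
    ∫ v in Ioi 0, (a / 2 * (v * √v)⁻¹ + b / 2 * (√v)⁻¹) • g (b * √v - a / √v) = ∫ u, g u := by
  have h := integral_image_eq_integral_abs_deriv_smul measurableSet_Ioi
    (fun v hv => (hasDerivAt_mul_sqrt_sub_div_sqrt hv).hasDerivWithinAt)
    (strictMonoOn_mul_sqrt_sub_div_sqrt ha hb).injOn g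
  rw [image_mul_sqrt_sub_div_sqrt_Ioi ha hb, setIntegral_univ] at h
  rw [h]
  refine setIntegral_congr_fun measurableSet_Ioi fun v (hv : 0 < v) => ?_
  rw [abs_of_pos (by positivity)]

lemma exp_neg_half_mul_sq_mul_sqrt_sub_div_sqrt {v : ℝ} (hv : 0 < v) :
    exp (-(1 / 2) * (b * √v - a / √v) ^ 2)
      = exp (a * b) * exp (-(a ^ 2 / (2 * v)) - b ^ 2 * v / 2) := by
  have hs : 0 < √v := sqrt_pos.2 hv
  rw [← exp_add, show v = √v ^ 2 from (sq_sqrt hv.le).symm, sqrt_sq hs.le]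
  congr 1
  field_simp
  ring

lemma levy_jacobian_mul_exp_eq {v : ℝ} (hv : 0 < v) :
    (a / 2 * (v * √v)⁻¹ + b / 2 * (√v)⁻¹) * exp (-(a ^ 2 / (2 * v)) - b ^ 2 * v / 2)
      = exp (-(a * b)) * ((a / 2 * (v * √v)⁻¹ + b / 2 * (√v)⁻¹) •
          exp (-(1 / 2) * (b * √v - a / √v) ^ 2)) := by
  rw [exp_neg_half_mul_sq_mul_sqrt_sub_div_sqrt hv, smul_eq_mul, exp_neg]
  field_simp

lemma integrableOn_levy_jacobian_mul_exp (ha : 0 < a) (hb : 0 < b) :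
    IntegrableOn (fun v => (a / 2 * (v * √v)⁻¹ + b / 2 * (√v)⁻¹) *
      exp (-(a ^ 2 / (2 * v)) - b ^ 2 * v / 2)) (Ioi 0) := by
  have h := ((integrableOn_levy_jacobian_smul_iff ha hb _).2
    (integrable_exp_neg_mul_sq (b := 1 / 2) (by norm_num))).const_mul (exp (-(a * b)))
  exact IntegrableOn.congr_fun h (fun v hv => (levy_jacobian_mul_exp_eq hv).symm)
    measurableSet_Ioi

lemma integral_levy_jacobian_mul_exp (ha : 0 < a) (hb : 0 < b) :
    ∫ v in Ioi 0, (a / 2 * (v * √v)⁻¹ + b / 2 * (√v)⁻¹) *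
      exp (-(a ^ 2 / (2 * v)) - b ^ 2 * v / 2) = exp (-(a * b)) * √(2 * π) := by
  rw [setIntegral_congr_fun measurableSet_Ioi (fun v hv => levy_jacobian_mul_exp_eq hv),
    integral_const_mul, integral_levy_jacobian_smul ha hb fun u => exp (-(1 / 2) * u ^ 2),
    integral_gaussian]
  norm_num [div_div_eq_mul_div, mul_comm]

lemma integral_sqrt_inv_mul_levy_exp (ha : 0 < a) (hb : 0 < b) :
    ∫ v in Ioi 0, (√v)⁻¹ * exp (-(a ^ 2 / (2 * v)) - b ^ 2 * v / 2)
      = a / b * ∫ v in Ioi 0, (v * √v)⁻¹ * exp (-(a ^ 2 / (2 * v)) - b ^ 2 * v / 2) := by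
  rw [← integral_Ioi_div_sq_smul_comp_div (pow_pos (div_pos ha hb) 2), ← integral_const_mul]
  refine setIntegral_congr_fun measurableSet_Ioi fun v (hv : 0 < v) => ?_
  have hs : 0 < √v := sqrt_pos.2 hv
  rw [smul_eq_mul, sqrt_div' _ hv.le, sqrt_sq (div_pos ha hb).le]
  rw [show v = √v ^ 2 from (sq_sqrt hv.le).symm, sqrt_sq hs.le]
  field_simp
  ring_nf

lemma integrableOn_levy_exp (ha : 0 < a) (hb : 0 < b) :
    IntegrableOn (fun v => (v * √v)⁻¹ * exp (-(a ^ 2 / (2 * v)) - b ^ 2 * v / 2)) (Ioi 0) ∧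
      IntegrableOn (fun v => (√v)⁻¹ * exp (-(a ^ 2 / (2 * v)) - b ^ 2 * v / 2)) (Ioi 0) := by
  have hS := integrableOn_levy_jacobian_mul_exp ha hb
  constructor
  · refine Integrable.mono' (hS.const_mul (2 / a)) (by fun_prop) ?_
    filter_upwards [ae_restrict_mem measurableSet_Ioi] with v (hv : 0 < v)
    rw [norm_of_nonneg (by positivity)]
    field_simp
    nlinarith
  · refine Integrable.mono' (hS.const_mul (2 / b)) (by fun_prop) ?_
    filter_upwards [ae_restrict_mem measurableSet_Ioi] with v (hv : 0 < v)
    rw [norm_of_nonneg (by positivity)]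
    field_simp
    nlinarith

theorem integral_levy_exp (ha : 0 < a) (hb : 0 < b) :
    ∫ v in Ioi 0, (v * √v)⁻¹ * exp (-(a ^ 2 / (2 * v)) - b ^ 2 * v / 2)
      = √(2 * π) / a * exp (-(a * b)) := by
  obtain ⟨h₁, h₂⟩ := integrableOn_levy_exp ha hb
  have h := integral_levy_jacobian_mul_exp ha hb
  simp only [add_mul, mul_assoc] at h
  rw [integral_add (h₁.const_mul _) (h₂.const_mul _), integral_const_mul, integral_const_mul,
    integral_sqrt_inv_mul_levy_exp ha hb] at h
  set I := ∫ v in Ioi 0, (v * √v)⁻¹ * exp (-(a ^ 2 / (2 * v)) - b ^ 2 * v / 2)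
  field_simp at h ⊢
  linear_combination h / 2

end LevySubstitution

noncomputable def mixtureKernel (μ x v : ℝ) : ℝ :=
  1 / v * exp (-1 / (2 * v)) * exp (-μ ^ 2 * v / 2) *
    ((2 * π * v) ^ (-(1:ℝ) / 2) * exp (-x ^ 2 / (2 * v)))

section MixtureKernel

variable {μ : ℝ}

lemma mixtureKernel_eq (x : ℝ) {v : ℝ} (hv : 0 < v) :
    mixtureKernel μ x v = (√(2 * π))⁻¹ *
      ((v * √v)⁻¹ * exp (-(√(1 + x ^ 2) ^ 2 / (2 * v)) - μ ^ 2 * v / 2)) := by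
  have hrpow : (2 * π * v) ^ (-(1:ℝ) / 2) = (√(2 * π) * √v)⁻¹ := by
    rw [neg_div, rpow_neg (by positivity), ← sqrt_eq_rpow, sqrt_mul (by positivity)]
  have hexp : exp (-((1 + x ^ 2) / (2 * v)) - μ ^ 2 * v / 2)
      = exp (-1 / (2 * v)) * exp (-μ ^ 2 * v / 2) * exp (-x ^ 2 / (2 * v)) := by
    rw [← exp_add, ← exp_add]
    ring_nf
  rw [mixtureKernel, sq_sqrt (by positivity), hrpow, hexp]
  field_simp

lemma integrableOn_mixtureKernel (hμ : 0 < μ) (x : ℝ) :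
    IntegrableOn (mixtureKernel μ x) (Ioi 0) :=
  IntegrableOn.congr_fun (((integrableOn_levy_exp (sqrt_pos.2 (by positivity)) hμ).1).const_mul _)
    (fun v hv => (mixtureKernel_eq x hv).symm) measurableSet_Ioi

lemma integral_mixtureKernel (hμ : 0 < μ) (x : ℝ) :
    ∫ v in Ioi 0, mixtureKernel μ x v = exp (-μ * √(1 + x ^ 2)) / √(1 + x ^ 2) := by
  have ha : 0 < √(1 + x ^ 2) := sqrt_pos.2 (by positivity)
  rw [setIntegral_congr_fun measurableSet_Ioi fun v hv => mixtureKernel_eq x hv,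
    integral_const_mul, integral_levy_exp ha hμ]
  field_simp

lemma mixtureKernel_nonneg (x : ℝ) {v : ℝ} (hv : 0 < v) : 0 ≤ mixtureKernel μ x v := by
  rw [mixtureKernel_eq x hv]
  positivity

lemma measurable_mixtureKernel : Measurable (Function.uncurry (mixtureKernel μ)) := by
  unfold mixtureKernel
  fun_prop

end MixtureKernel

theorem stmt_0 (μ : ℝ) (hμ : 0 < μ) (f : ℝ → ℝ) (hf : Measurable f)
    (hint : Integrable (fun y : ℝ => Real.exp (-μ * Real.cosh y) * |f (Real.sinh y)|)) :
    ∫ y : ℝ, Real.exp (-μ * Real.cosh y) * f (Real.sinh y)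
      = ∫ v in Ioi (0:ℝ),
          (1 / v) * Real.exp (-1 / (2 * v)) * Real.exp (-μ ^ 2 * v / 2) *
            (∫ x : ℝ, f x * ((2 * π * v) ^ (-(1:ℝ) / 2) * Real.exp (-x ^ 2 / (2 * v)))) := by
  have hfK : Integrable fun x => f x * ∫ v in Ioi 0, mixtureKernel μ x v := by
    simpa only [integral_mixtureKernel hμ] using
      integrable_mul_exp_div_sqrt_one_add_sq μ hf.aestronglyMeasurable hint
  calc ∫ y, exp (-μ * cosh y) * f (sinh y)
      = ∫ x, f x * ∫ v in Ioi 0, mixtureKernel μ x v := by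
        simp only [integral_mixtureKernel hμ, integral_exp_mul_comp_sinh]
    _ = ∫ v in Ioi 0, ∫ x, f x * mixtureKernel μ x v :=
        (integral_integral_mul_kernel_swap hf.aestronglyMeasurable
          measurable_mixtureKernel.aestronglyMeasurable
          (fun x => (ae_restrict_mem measurableSet_Ioi).mono fun v hv => mixtureKernel_nonneg x hv)
          (integrableOn_mixtureKernel hμ) hfK).symm
    _ = _ := by
        congr 1 with v
        rw [← integral_const_mul]
        congr 1 with x
        rw [mixtureKernel]
        ring
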